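/- For every real δ, the function d ↦ K(δ,d), where K is the piecewise kernel K(δ,d)=e^{−|d|} for (d<0, δ≤d) or (d>0, δ>d), K(δ,d)=e^{−|d|−(δ−d)} for (d<0, δ>d), and K(δ,d)=e^{−|d|−(d−δ)} for (d>0, δ≤d), is a probability density: it is nonnegative and its integral over ℝ equals 1. -/

import Mathlib

/-!
For `d > 0` the kernel is `exp (-d - max 0 (d - δ))`, and for `d < 0` it is the same expression
at `(-d, -δ)`. The integral of `d ↦ exp (-d - max 0 (d - t))` over `(0, ∞)` is the distribution
function `F t` of the standard Laplace law (density `exp (-|x|) / 2`), so the two half-lines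
contribute `F δ + F (-δ) = 1`.
-/

open Real MeasureTheory

/-- The piecewise transition kernel (the value at `d = 0` is irrelevant for the integral). -/
noncomputable def Kker (δ d : ℝ) : ℝ :=
  if d < 0 then (if δ ≤ d then exp (-|d|) else exp (-|d| - (δ - d)))
  else if d = 0 then exp (-|δ|)
  else if δ ≤ d then exp (-|d| - (d - δ))
  else exp (-|d|)

open Set

noncomputable def laplaceCDF (t : ℝ) : ℝ :=
  if t ≤ 0 then exp t / 2 else 1 - exp (-t) / 2

lemma laplaceCDF_add_laplaceCDF_neg (t : ℝ) : laplaceCDF t + laplaceCDF (-t) = 1 := by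
  unfold laplaceCDF
  rcases lt_trichotomy t 0 with ht | rfl | ht
  · rw [if_pos ht.le, if_neg (by linarith), neg_neg]
    ring
  · norm_num
  · rw [if_neg (not_le.2 ht), if_pos (by linarith)]
    ring

lemma integral_Ioi_exp_sub_two_mul (a t : ℝ) :
    ∫ d in Ioi a, exp (t - 2 * d) = exp (t - 2 * a) / 2 := by
  simp_rw [sub_eq_add_neg t, exp_add, ← neg_mul]
  rw [integral_const_mul, integral_exp_mul_Ioi (by norm_num)]
  ring

lemma integral_Ioc_exp_neg {a b : ℝ} (hab : a ≤ b) :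
    ∫ d in Ioc a b, exp (-d) = exp (-a) - exp (-b) := by
  rw [← intervalIntegral.integral_of_le hab, intervalIntegral.integral_comp_neg exp,
    integral_exp]

lemma integrableOn_exp_neg_sub_max (t : ℝ) :
    IntegrableOn (fun d => exp (-d - max 0 (d - t))) (Ioi 0) := by
  refine (integrableOn_exp_neg_Ioi 0).mono' (by fun_prop) ?_
  filter_upwards with d
  rw [norm_of_nonneg (exp_pos _).le]
  exact exp_le_exp.2 (by linarith [le_max_left 0 (d - t)])

lemma integral_exp_neg_sub_max (t : ℝ) :
    ∫ d in Ioi 0, exp (-d - max 0 (d - t)) = laplaceCDF t := by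
  have hgt : ∀ a, t ≤ a →
      EqOn (fun d => exp (-d - max 0 (d - t))) (fun d => exp (t - 2 * d)) (Ioi a) :=
    fun a hta d (hd : a < d) => by
      dsimp only
      rw [max_eq_right (by linarith)]
      congr 1
      ring
  unfold laplaceCDF
  split_ifs with ht
  · rw [setIntegral_congr_fun measurableSet_Ioi (hgt 0 ht), integral_Ioi_exp_sub_two_mul,
      mul_zero, sub_zero]
  · replace ht := not_le.1 ht
    have hle : EqOn (fun d => exp (-d - max 0 (d - t))) (fun d => exp (-d)) (Ioc 0 t) :=
      fun d hd => by simp [max_eq_left (sub_nonpos.2 hd.2)]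
    have hint := integrableOn_exp_neg_sub_max t
    rw [← Ioc_union_Ioi_eq_Ioi ht.le, setIntegral_union Ioc_disjoint_Ioi_same measurableSet_Ioi
      (hint.mono_set Ioc_subset_Ioi_self) (hint.mono_set (Ioi_subset_Ioi ht.le)),
      setIntegral_congr_fun measurableSet_Ioc hle,
      setIntegral_congr_fun measurableSet_Ioi (hgt t le_rfl),
      integral_Ioc_exp_neg ht.le, integral_Ioi_exp_sub_two_mul, neg_zero, exp_zero,
      show t - 2 * t = -t by ring]
    ring

lemma Kker_nonneg (δ d : ℝ) : 0 ≤ Kker δ d := by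
  unfold Kker
  split_ifs <;> positivity

lemma Kker_of_pos {δ d : ℝ} (hd : 0 < d) : Kker δ d = exp (-d - max 0 (d - δ)) := by
  rw [Kker, if_neg hd.not_gt, if_neg hd.ne', abs_of_pos hd]
  split_ifs with h
  · rw [max_eq_right (by linarith)]
  · rw [max_eq_left (by linarith), sub_zero]

lemma Kker_neg_of_pos {δ d : ℝ} (hd : 0 < d) : Kker δ (-d) = exp (-d - max 0 (d - -δ)) := by
  rw [Kker, if_pos (neg_lt_zero.2 hd), abs_neg, abs_of_pos hd]
  split_ifs with h
  · rw [max_eq_left (by linarith), sub_zero]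
  · rw [max_eq_right (by linarith)]
    ring_nf

theorem Kker_probability_density (δ : ℝ) :
    (∀ d : ℝ, 0 ≤ Kker δ d) ∧ (∫ d : ℝ, Kker δ d = 1) := by
  refine ⟨Kker_nonneg δ, ?_⟩
  have hright : EqOn (Kker δ) (fun d => exp (-d - max 0 (d - δ))) (Ioi 0) :=
    fun _ hd => Kker_of_pos hd
  have hleft : EqOn (fun d => Kker δ (-d)) (fun d => exp (-d - max 0 (d - -δ))) (Ioi 0) :=
    fun _ hd => Kker_neg_of_pos hd
  have hint_right : IntegrableOn (Kker δ) (Ioi 0) :=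
    (integrableOn_exp_neg_sub_max δ).congr_fun hright.symm measurableSet_Ioi
  have hint_left : IntegrableOn (Kker δ) (Iic 0) := by
    have := ((integrableOn_exp_neg_sub_max (-δ)).congr_fun hleft.symm measurableSet_Ioi).comp_neg
    rw [integrableOn_Iic_iff_integrableOn_Iio]
    simpa using this
  have hreflect : ∫ d in Iic 0, Kker δ d = ∫ d in Ioi 0, Kker δ (-d) := by
    rw [integral_comp_neg_Ioi, neg_zero]
  rw [← intervalIntegral.integral_Iic_add_Ioi hint_left hint_right, hreflect,
    setIntegral_congr_fun measurableSet_Ioi hleft, setIntegral_congr_fun measurableSet_Ioi hright,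
    integral_exp_neg_sub_max, integral_exp_neg_sub_max, add_comm, laplaceCDF_add_laplaceCDF_neg]
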